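/- Every primitive Eisensteinian triplet (a, b, c) with b > c other than (1,1,1) is obtained exactly once in the following construction: there exist a unique finite (possibly empty) sequence α₁,…,α_k ∈ {1,2,3,4,5}, a unique v ∈ {(7,8,5)ᵗ, (13,15,7)ᵗ}, and a unique choice between (a,b,c) and its twin (a,b,b−c), such that M_{α₁}···M_{α_k} · v equals (a,b,c)ᵗ or (a,b,b−c)ᵗ, where M₁ = [[7,−6,6],[8,−7,7],[4,−4,3]], M₂ = [[7,6,−6],[8,7,−7],[4,3,−4]], M₃ = [[7,6,0],[8,7,0],[4,3,1]], M₄ = [[7,0,6],[8,0,7],[4,1,3]], M₅ = [[7,0,−6],[8,0,−7],[4,1,−4]]. -/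

import Mathlib

open Matrix

/-- A primitive Eisensteinian triplet: positive integers with
`a² = b² + c² − bc` and `gcd(a,b,c) = 1`. -/
def IsPrimitiveEisenstein (a b c : ℤ) : Prop :=
  0 < a ∧ 0 < b ∧ 0 < c ∧ a ^ 2 = b ^ 2 + c ^ 2 - b * c ∧
    Int.gcd a (Int.gcd b c) = 1

/-- The five matrices `M₁, …, M₅`. -/
def Mmat : Fin 5 → Matrix (Fin 3) (Fin 3) ℤ
  | 0 => !![7, -6, 6; 8, -7, 7; 4, -4, 3]
  | 1 => !![7, 6, -6; 8, 7, -7; 4, 3, -4]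
  | 2 => !![7, 6, 0; 8, 7, 0; 4, 3, 1]
  | 3 => !![7, 0, 6; 8, 0, 7; 4, 1, 3]
  | 4 => !![7, 0, -6; 8, 0, -7; 4, 1, -4]

/-!
Each `Mᵢ` is invertible over `ℤ` and preserves the form `b² + c² − bc − a²`, so it preserves
primitive solutions; it also keeps solutions inside the cone `0 < c < b`. Conversely, for a
solution `w = (a, b, c)` in the cone, `Mᵢ⁻¹ w` lies in the cone for exactly one `i`, unless `w` is
one of `(7,8,5)`, `(7,8,3)`, `(13,15,7)`, `(13,15,8)`, for which no `i` works. Since the first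
coordinate of every `Mᵢ⁻¹ w` is `7a − 6b`, which lies in `(0, a)`, repeatedly passing to this
parent terminates at one of these four triplets; uniqueness of the parent makes the word unique.
The twin map is a matrix `T` with `T Mᵢ = M₆₋ᵢ T` (`Fin.rev` for `0`-based indices) which swaps
`(7,8,5) ↔ (7,8,3)` and `(13,15,7) ↔ (13,15,8)`; hence exactly one of a triplet and its twin
descends to a root `(7,8,5)` or `(13,15,7)`.
-/

namespace EisensteinForest

def eisensteinForm (v : Fin 3 → ℤ) : ℤ := v 1 ^ 2 + v 2 ^ 2 - v 1 * v 2 - v 0 ^ 2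

def vecGcd (v : Fin 3 → ℤ) : ℕ := Int.gcd (v 0) (Int.gcd (v 1) (v 2))

def InCone (v : Fin 3 → ℤ) : Prop := 0 < v 2 ∧ v 2 < v 1

structure IsOrderedTriplet (v : Fin 3 → ℤ) : Prop where
  pos : 0 < v 0
  inCone : InCone v
  form : eisensteinForm v = 0
  gcd : vecGcd v = 1

def MmatInv : Fin 5 → Matrix (Fin 3) (Fin 3) ℤ
  | 0 => !![7, -6, 0; 4, -3, -1; -4, 4, -1]
  | 1 => !![7, -6, 0; -4, 4, -1; 4, -3, -1]
  | 2 => !![7, -6, 0; -8, 7, 0; -4, 3, 1]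
  | 3 => !![7, -6, 0; -4, 3, 1; -8, 7, 0]
  | 4 => !![7, -6, 0; 4, -4, 1; 8, -7, 0]

def twinMat : Matrix (Fin 3) (Fin 3) ℤ := !![1, 0, 0; 0, 1, 0; 0, 1, -1]

def baseTriplets : Set (Fin 3 → ℤ) := {![7, 8, 5], ![7, 8, 3], ![13, 15, 7], ![13, 15, 8]}

lemma Mmat_mul_MmatInv (i : Fin 5) : Mmat i * MmatInv i = 1 := by
  fin_cases i <;> decide

lemma MmatInv_mul_Mmat (i : Fin 5) : MmatInv i * Mmat i = 1 :=
  mul_eq_one_comm.1 (Mmat_mul_MmatInv i)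

lemma MmatInv_mulVec_Mmat_mulVec (i : Fin 5) (v : Fin 3 → ℤ) :
    MmatInv i *ᵥ (Mmat i *ᵥ v) = v := by
  rw [mulVec_mulVec, MmatInv_mul_Mmat, one_mulVec]

lemma MmatInv_mulVec_zero (i : Fin 5) (v : Fin 3 → ℤ) :
    (MmatInv i *ᵥ v) 0 = 7 * v 0 - 6 * v 1 := by
  fin_cases i <;> simp [MmatInv, mulVec, dotProduct, Fin.sum_univ_three] <;> ring

lemma twinMat_mul_Mmat (i : Fin 5) : twinMat * Mmat i = Mmat i.rev * twinMat := by
  fin_cases i <;> decide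

lemma twinMat_mul_prod (l : List (Fin 5)) :
    twinMat * (l.map Mmat).prod = ((l.map Fin.rev).map Mmat).prod * twinMat := by
  induction l with
  | nil => simp
  | cons i l ih =>
    simp only [List.map_cons, List.prod_cons]
    rw [← mul_assoc, twinMat_mul_Mmat, mul_assoc, ih, mul_assoc]

lemma twinMat_mulVec_vec3 (a b c : ℤ) : twinMat *ᵥ ![a, b, c] = ![a, b, b - c] := by
  ext k; fin_cases k <;> simp [twinMat, mulVec, dotProduct, Fin.sum_univ_three]; ring

lemma dvd_mulVec_apply {m n R : Type*} [Fintype n] [CommSemiring R] {d : R} {v : n → R}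
    (h : ∀ j, d ∣ v j) (A : Matrix m n R) (k : m) : d ∣ (A *ᵥ v) k :=
  Finset.dvd_sum fun j _ => (h j).mul_left _

lemma dvd_vecGcd_iff {d : ℕ} {v : Fin 3 → ℤ} : d ∣ vecGcd v ↔ ∀ k, (d : ℤ) ∣ v k := by
  rw [vecGcd, Int.dvd_gcd_iff, Int.natCast_dvd_natCast, Int.dvd_gcd_iff]
  exact ⟨fun ⟨h0, h1, h2⟩ k => by fin_cases k <;> assumption, fun h => ⟨h 0, h 1, h 2⟩⟩

lemma vecGcd_mulVec_eq_one {A B : Matrix (Fin 3) (Fin 3) ℤ} (hBA : B * A = 1) {v : Fin 3 → ℤ}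
    (hv : vecGcd v = 1) : vecGcd (A *ᵥ v) = 1 := by
  have hdvd : ∀ k, (vecGcd (A *ᵥ v) : ℤ) ∣ v k := fun k => by
    simpa [mulVec_mulVec, hBA] using
      dvd_mulVec_apply (v := A *ᵥ v) (dvd_vecGcd_iff.1 dvd_rfl) B k
  simpa [hv] using dvd_vecGcd_iff.2 hdvd

lemma eq_of_eq_smul {v r : Fin 3 → ℤ} {k : ℤ} (hv : vecGcd v = 1) (hk : 0 < k) (h : v = k • r) :
    v = r := by
  lift k to ℕ using hk.le
  have : k ∣ vecGcd v := dvd_vecGcd_iff.2 fun j => by simp [h]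
  obtain rfl : k = 1 := by simpa [hv] using this
  simpa using h

lemma eisensteinForm_Mmat_mulVec (i : Fin 5) (v : Fin 3 → ℤ) :
    eisensteinForm (Mmat i *ᵥ v) = eisensteinForm v := by
  fin_cases i <;> simp [eisensteinForm, Mmat, mulVec, dotProduct, Fin.sum_univ_three] <;> ring

lemma eisensteinForm_MmatInv_mulVec (i : Fin 5) (v : Fin 3 → ℤ) :
    eisensteinForm (MmatInv i *ᵥ v) = eisensteinForm v := by
  rw [← eisensteinForm_Mmat_mulVec i, mulVec_mulVec, Mmat_mul_MmatInv, one_mulVec]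

/-- With `(y, z) = (7b − 8a, 3b + c − 4a)` the last two coordinates of `M₃⁻¹ w`, the five
conditions `InCone (MmatInv i *ᵥ w)` are five of the six open sectors into which the lines
`y = 0`, `z = 0`, `y = z` cut the plane; the sixth one is `y < z < 0`. -/
lemma eq_of_inCone_MmatInv {w : Fin 3 → ℤ} {i j : Fin 5} (hi : InCone (MmatInv i *ᵥ w))
    (hj : InCone (MmatInv j *ᵥ w)) : i = j := by
  fin_cases i <;> fin_cases j <;>
    simp [InCone, MmatInv, mulVec, dotProduct, Fin.sum_univ_three] at hi hj ⊢ <;> omega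

lemma not_inCone_MmatInv_of_mem {w : Fin 3 → ℤ} (hw : w ∈ baseTriplets) (i : Fin 5) :
    ¬ InCone (MmatInv i *ᵥ w) := by
  simp only [baseTriplets, Set.mem_insert_iff, Set.mem_singleton_iff] at hw
  rcases hw with rfl | rfl | rfl | rfl <;> fin_cases i <;> unfold InCone <;> decide

lemma eq_of_Mmat_mulVec_eq {u u' : Fin 3 → ℤ} {i j : Fin 5} (hu : InCone u) (hu' : InCone u')
    (h : Mmat i *ᵥ u = Mmat j *ᵥ u') : i = j ∧ u = u' := by
  obtain rfl : i = j := eq_of_inCone_MmatInv (w := Mmat i *ᵥ u)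
    (by rwa [MmatInv_mulVec_Mmat_mulVec]) (by rwa [h, MmatInv_mulVec_Mmat_mulVec])
  exact ⟨rfl, by rw [← MmatInv_mulVec_Mmat_mulVec i u, h, MmatInv_mulVec_Mmat_mulVec]⟩

lemma Mmat_mulVec_not_mem_baseTriplets {u : Fin 3 → ℤ} (hu : InCone u) (i : Fin 5) :
    Mmat i *ᵥ u ∉ baseTriplets := fun hm =>
  not_inCone_MmatInv_of_mem hm i (by rwa [MmatInv_mulVec_Mmat_mulVec])

namespace IsOrderedTriplet

variable {v : Fin 3 → ℤ}

lemma of_isPrimitiveEisenstein {a b c : ℤ} (h : IsPrimitiveEisenstein a b c) (hbc : c < b) :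
    IsOrderedTriplet ![a, b, c] :=
  ⟨h.1, ⟨h.2.2.1, hbc⟩, by simp [eisensteinForm, h.2.2.2.1], h.2.2.2.2⟩

lemma of_mem_baseTriplets (hv : v ∈ baseTriplets) : IsOrderedTriplet v := by
  simp only [baseTriplets, Set.mem_insert_iff, Set.mem_singleton_iff] at hv
  rcases hv with rfl | rfl | rfl | rfl <;>
    exact ⟨by decide, by unfold InCone; decide, by decide, by decide⟩

lemma mulVec_of_mul_eq_one {A B : Matrix (Fin 3) (Fin 3) ℤ} (hv : IsOrderedTriplet v)
    (hBA : B * A = 1) (hA : eisensteinForm (A *ᵥ v) = eisensteinForm v) (h0 : 0 < (A *ᵥ v) 0)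
    (hc : InCone (A *ᵥ v)) : IsOrderedTriplet (A *ᵥ v) :=
  ⟨h0, hc, hA.trans hv.form, vecGcd_mulVec_eq_one hBA hv.gcd⟩

lemma lt_snd (hv : IsOrderedTriplet v) : v 0 < v 1 := by
  obtain ⟨h0, ⟨h2, h21⟩, hQ, -⟩ := hv
  simp only [eisensteinForm] at hQ
  nlinarith [mul_pos h2 (sub_pos.mpr h21)]

lemma six_mul_snd_lt (hv : IsOrderedTriplet v) : 6 * v 1 < 7 * v 0 := by
  obtain ⟨h0, ⟨h2, h21⟩, hQ, -⟩ := hv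
  simp only [eisensteinForm] at hQ
  -- `52 (49a² − 36b²) = (26b − 49c)² + 147c²`
  nlinarith [sq_nonneg (26 * v 1 - 49 * v 2), mul_pos h2 h2]

lemma four_mul_snd_lt (hv : IsOrderedTriplet v) : 4 * v 1 < 4 * v 0 + 3 * v 2 := by
  obtain ⟨h0, ⟨h2, h21⟩, hQ, -⟩ := hv
  simp only [eisensteinForm] at hQ
  nlinarith [mul_pos h2 (h2.trans h21), mul_pos h2 h2]

lemma snd_add_three_mul_lt (hv : IsOrderedTriplet v) : v 1 + 3 * v 2 < 4 * v 0 := by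
  obtain ⟨h0, ⟨h2, h21⟩, hQ, -⟩ := hv
  simp only [eisensteinForm] at hQ
  nlinarith [mul_pos (sub_pos.mpr h21) (h2.trans h21), mul_pos (sub_pos.mpr h21) h2]

lemma Mmat_mulVec (hv : IsOrderedTriplet v) (i : Fin 5) : IsOrderedTriplet (Mmat i *ᵥ v) := by
  have h₁ := hv.four_mul_snd_lt
  have h₂ := hv.snd_add_three_mul_lt
  have hc := hv.inCone
  refine hv.mulVec_of_mul_eq_one (MmatInv_mul_Mmat i) (eisensteinForm_Mmat_mulVec i v) ?_ ?_ <;>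
    fin_cases i <;> simp [InCone, Mmat, mulVec, dotProduct, Fin.sum_univ_three] at hc ⊢ <;>
    omega

lemma prod_mulVec (hv : IsOrderedTriplet v) (l : List (Fin 5)) :
    IsOrderedTriplet ((l.map Mmat).prod *ᵥ v) := by
  induction l with
  | nil => simpa using hv
  | cons i l ih => simpa [← mulVec_mulVec] using ih.Mmat_mulVec i

lemma MmatInv_mulVec (hv : IsOrderedTriplet v) {i : Fin 5} (hi : InCone (MmatInv i *ᵥ v)) :
    IsOrderedTriplet (MmatInv i *ᵥ v) :=
  hv.mulVec_of_mul_eq_one (Mmat_mul_MmatInv i) (eisensteinForm_MmatInv_mulVec i v)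
    (by rw [MmatInv_mulVec_zero]; linarith [hv.six_mul_snd_lt]) hi

/-- On the three lines bounding the sectors of `eq_of_inCone_MmatInv`, the form forces `v` to be a
multiple of a base triplet, and primitivity makes the multiple `1`. -/
lemma mem_baseTriplets_of_degenerate (hv : IsOrderedTriplet v)
    (h : (8 * v 0 - 7 * v 1) * (4 * v 0 - 3 * v 1 - v 2) * (4 * v 0 - 4 * v 1 + v 2) = 0) :
    v ∈ baseTriplets := by
  have hQ := hv.form
  have hc := hv.inCone
  simp only [eisensteinForm, InCone] at hQ hc
  have hmem : ∀ {k : ℤ} (a b c : ℤ), ![a, b, c] ∈ baseTriplets → 0 < k →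
      v 0 = k * a ∧ v 1 = k * b ∧ v 2 = k * c → v ∈ baseTriplets := fun a b c hr hk h =>
    eq_of_eq_smul (r := ![a, b, c]) hv.gcd hk (by ext j; fin_cases j <;> simp [h]) ▸ hr
  rcases mul_eq_zero.1 h with h | h
  rcases mul_eq_zero.1 h with h | h
  · have : (v 2 - 3 * (v 1 - v 0)) * (v 2 - 5 * (v 1 - v 0)) = 0 := by
      linear_combination hQ + (v 2 - 2 * (v 1 - v 0)) * h
    rcases mul_eq_zero.1 this with h' | h'
    · exact hmem 7 8 3 (by simp [baseTriplets]) (k := v 1 - v 0) (by omega) (by omega)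
    · exact hmem 7 8 5 (by simp [baseTriplets]) (k := v 1 - v 0) (by omega) (by omega)
  · have : (v 1 - v 2) * (7 * v 1 - 15 * v 2) = 0 := by
      linear_combination 16 * hQ + (4 * v 0 + 3 * v 1 + v 2) * h
    rcases mul_eq_zero.1 this with h' | h'
    · omega
    · exact hmem 13 15 7 (by simp [baseTriplets]) (k := v 1 - 2 * v 2) (by omega) (by omega)
  · have : v 2 * (15 * v 2 - 8 * v 1) = 0 := by
      linear_combination 16 * hQ + (4 * v 0 + 4 * v 1 - v 2) * h
    rcases mul_eq_zero.1 this with h' | h'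
    · omega
    · exact hmem 13 15 8 (by simp [baseTriplets]) (k := 2 * v 2 - v 1) (by omega) (by omega)

lemma not_mem_sixth_sector (hv : IsOrderedTriplet v) :
    ¬ (4 * v 1 < 4 * v 0 + v 2 ∧ 3 * v 1 + v 2 < 4 * v 0) := by
  rintro ⟨h₁, h₂⟩
  have ha := hv.pos
  have hQ := hv.form
  obtain ⟨hc, hcb⟩ := hv.inCone
  simp only [eisensteinForm] at hQ
  have : 8 * v 1 < 15 * v 2 := by nlinarith
  have : 15 * v 2 < 7 * v 1 := by nlinarith
  omega

lemma exists_inCone_MmatInv (hv : IsOrderedTriplet v) (hb : v ∉ baseTriplets) :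
    ∃ i, InCone (MmatInv i *ᵥ v) := by
  have hdeg := mt hv.mem_baseTriplets_of_degenerate hb
  have hsixth := hv.not_mem_sixth_sector
  simp only [mul_eq_zero, not_or] at hdeg
  by_contra! hnone
  have h₀ := hnone 0
  have h₁ := hnone 1
  have h₂ := hnone 2
  have h₃ := hnone 3
  have h₄ := hnone 4
  simp [InCone, MmatInv, mulVec, dotProduct, Fin.sum_univ_three] at h₀ h₁ h₂ h₃ h₄
  omega

lemma exists_parent (hv : IsOrderedTriplet v) (hb : v ∉ baseTriplets) :
    ∃ i p, IsOrderedTriplet p ∧ p 0 < v 0 ∧ Mmat i *ᵥ p = v := by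
  obtain ⟨i, hi⟩ := hv.exists_inCone_MmatInv hb
  refine ⟨i, _, hv.MmatInv_mulVec hi, ?_, by rw [mulVec_mulVec, Mmat_mul_MmatInv, one_mulVec]⟩
  rw [MmatInv_mulVec_zero]
  linarith [hv.lt_snd]

end IsOrderedTriplet

lemma eq_of_prod_mulVec_eq {l l' : List (Fin 5)} {s s' : Fin 3 → ℤ} (hs : s ∈ baseTriplets)
    (hs' : s' ∈ baseTriplets) (h : (l.map Mmat).prod *ᵥ s = (l'.map Mmat).prod *ᵥ s') :
    l = l' ∧ s = s' := by
  have hcone : ∀ {s} (l : List (Fin 5)), s ∈ baseTriplets → InCone ((l.map Mmat).prod *ᵥ s) :=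
    fun l hs => ((IsOrderedTriplet.of_mem_baseTriplets hs).prod_mulVec l).inCone
  induction l generalizing l' with
  | nil =>
    cases l' with
    | nil => simpa using h
    | cons j l' =>
      simp only [List.map_nil, List.prod_nil, one_mulVec, List.map_cons, List.prod_cons,
        ← mulVec_mulVec] at h
      exact absurd (h ▸ hs) (Mmat_mulVec_not_mem_baseTriplets (hcone l' hs') j)
  | cons i l ih =>
    cases l' with
    | nil =>
      simp only [List.map_nil, List.prod_nil, one_mulVec, List.map_cons, List.prod_cons,
        ← mulVec_mulVec] at h
      exact absurd (h ▸ hs') (Mmat_mulVec_not_mem_baseTriplets (hcone l hs) i)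
    | cons j l' =>
      simp only [List.map_cons, List.prod_cons, ← mulVec_mulVec] at h
      obtain ⟨rfl, hu⟩ := eq_of_Mmat_mulVec_eq (hcone l hs) (hcone l' hs') h
      simpa using ih hu

def root (r : Bool) : Fin 3 → ℤ := cond r ![7, 8, 5] ![13, 15, 7]

def node (l : List (Fin 5)) (r : Bool) : Fin 3 → ℤ := (l.map Mmat).prod *ᵥ root r

lemma node_nil (r : Bool) : node [] r = root r := by simp [node]

lemma node_cons (i : Fin 5) (l : List (Fin 5)) (r : Bool) :
    node (i :: l) r = Mmat i *ᵥ node l r := by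
  simp [node, mulVec_mulVec]

lemma root_mem_baseTriplets (r : Bool) : root r ∈ baseTriplets := by
  cases r <;> simp [root, baseTriplets]

lemma twinMat_mulVec_root_mem_baseTriplets (r : Bool) : twinMat *ᵥ root r ∈ baseTriplets := by
  cases r <;> simp [root, baseTriplets, twinMat_mulVec_vec3]

lemma exists_root_eq_cond {w : Fin 3 → ℤ} (hw : w ∈ baseTriplets) :
    ∃ r e, root r = cond e w (twinMat *ᵥ w) := by
  simp only [baseTriplets, Set.mem_insert_iff, Set.mem_singleton_iff] at hw
  rcases hw with rfl | rfl | rfl | rfl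
  · exact ⟨true, true, rfl⟩
  · exact ⟨true, false, by decide⟩
  · exact ⟨false, true, rfl⟩
  · exact ⟨false, false, by decide⟩

lemma IsOrderedTriplet.exists_node {w : Fin 3 → ℤ} (hw : IsOrderedTriplet w) :
    ∃ l r e, node l r = cond e w (twinMat *ᵥ w) := by
  induction hn : (w 0).toNat using Nat.strong_induction_on generalizing w with
  | _ n ih =>
  by_cases hb : w ∈ baseTriplets
  · obtain ⟨r, e, h⟩ := exists_root_eq_cond hb
    exact ⟨[], r, e, by rw [node_nil, h]⟩
  obtain ⟨i, p, hp, hlt, rfl⟩ := hw.exists_parent hb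
  obtain ⟨l, r, e, hl⟩ := ih _ (by have := hp.pos; omega) hp rfl
  cases e
  · exact ⟨i.rev :: l, r, false, by
      rw [node_cons, hl, cond_false, cond_false, mulVec_mulVec, mulVec_mulVec, twinMat_mul_Mmat]⟩
  · exact ⟨i :: l, r, true, by rw [node_cons, hl, cond_true, cond_true]⟩

lemma node_injective {l l' : List (Fin 5)} {r r' : Bool} (h : node l r = node l' r') :
    l = l' ∧ r = r' := by
  obtain ⟨hl, hr⟩ := eq_of_prod_mulVec_eq (root_mem_baseTriplets r) (root_mem_baseTriplets r') h
  exact ⟨hl, by cases r <;> cases r' <;> first | rfl | exact absurd hr (by decide)⟩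

lemma twinMat_mulVec_node (l : List (Fin 5)) (r : Bool) :
    twinMat *ᵥ node l r = ((l.map Fin.rev).map Mmat).prod *ᵥ (twinMat *ᵥ root r) := by
  rw [node, mulVec_mulVec, twinMat_mul_prod, ← mulVec_mulVec]

lemma node_ne_twinMat_mulVec_node (l l' : List (Fin 5)) (r r' : Bool) :
    node l r ≠ twinMat *ᵥ node l' r' := by
  intro h
  rw [twinMat_mulVec_node] at h
  have hr := (eq_of_prod_mulVec_eq (root_mem_baseTriplets r)
    (twinMat_mulVec_root_mem_baseTriplets r') h).2
  cases r <;> cases r' <;> exact absurd hr (by decide)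

lemma eq_of_node_eq_cond {w : Fin 3 → ℤ} {l l' : List (Fin 5)} {r r' e e' : Bool}
    (h : node l r = cond e w (twinMat *ᵥ w)) (h' : node l' r' = cond e' w (twinMat *ᵥ w)) :
    (l, r, e) = (l', r', e') := by
  cases e <;> cases e' <;> simp only [cond_true, cond_false] at h h'
  · obtain ⟨rfl, rfl⟩ := node_injective (h.trans h'.symm); rfl
  · exact absurd (h.trans (by rw [h'])) (node_ne_twinMat_mulVec_node l l' r r')
  · exact absurd (h'.trans (by rw [h])) (node_ne_twinMat_mulVec_node l' l r' r)
  · obtain ⟨rfl, rfl⟩ := node_injective (h.trans h'.symm); rfl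

end EisensteinForest

open EisensteinForest

theorem eisenstein_forest_main_general (a b c : ℤ) (h : IsPrimitiveEisenstein a b c)
    (hbc : b > c) :
    ∃! t : List (Fin 5) × Bool × Bool,
      (t.1.map Mmat).prod.mulVec (cond t.2.1 ![7, 8, 5] ![13, 15, 7]) =
        cond t.2.2 ![a, b, c] ![a, b, b - c] := by
  have htwin := twinMat_mulVec_vec3 a b c
  obtain ⟨l, r, e, hnode⟩ := (IsOrderedTriplet.of_isPrimitiveEisenstein h hbc).exists_node
  exact ⟨(l, r, e), htwin ▸ hnode, fun t ht => eq_of_node_eq_cond (htwin ▸ ht) hnode⟩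

/-- main theorem: every primitive Eisensteinian triplet with
`b > c` other than `(1,1,1)` is obtained exactly once: there is a unique choice
of a word `α₁,…,α_k ∈ {1,…,5}`, of a root `v ∈ {(7,8,5)ᵗ, (13,15,7)ᵗ}`, and of
`(a,b,c)` versus its twin `(a,b,b−c)`, with `M_{α₁} ⋯ M_{α_k} · v` equal to the
chosen triple. -/
theorem eisenstein_forest_main (a b c : ℤ) (h : IsPrimitiveEisenstein a b c)
    (hbc : b > c) (hne : (a, b, c) ≠ (1, 1, 1)) :
    ∃! t : List (Fin 5) × Bool × Bool,
      (t.1.map Mmat).prod.mulVec (cond t.2.1 ![7, 8, 5] ![13, 15, 7]) =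
        cond t.2.2 ![a, b, c] ![a, b, b - c] :=
  eisenstein_forest_main_general a b c h hbc
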